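/- Suppose the real sequence (α_n)_{n≥0} satisfies the structure relation with (a_k), i.e. for every n ≥ 0: [n]_q a_n = Σ_{k=0}^{n} [n choose k]_q q^{n-k} α_k a_{n-k}. Then for every integer n ≥ 1 the q-Appell polynomial A_{n,q} satisfies the q-difference equation Σ_{k=0}^{n} (q^{n-k} α_k / [k]_q!) · D_q^k A_{n,q}(x) + x q^n D_q A_{n,q}(x) − [n]_q A_{n,q}(qx) = 0, as an identity of real polynomials in x. -/

import Mathlib

open Polynomial Finset

/-- The q-integer [n]_q = 1 + q + ... + q^(n-1). -/
noncomputable def qInt (q : ℝ) (n : ℕ) : ℝ := ∑ i ∈ Finset.range n, q ^ i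

/-- The q-factorial [n]_q! = [1]_q [2]_q ... [n]_q, with [0]_q! = 1. -/
noncomputable def qFact (q : ℝ) : ℕ → ℝ
  | 0 => 1
  | n + 1 => qFact q n * qInt q (n + 1)

/-- The q-binomial coefficient [n choose k]_q = [n]_q! / ([k]_q! [n-k]_q!). -/
noncomputable def qBinom (q : ℝ) (n k : ℕ) : ℝ := qFact q n / (qFact q k * qFact q (n - k))

/-- The q-derivative on real polynomials, determined by D_q(x^n) = [n]_q x^(n-1). -/
noncomputable def qDeriv (q : ℝ) (p : Polynomial ℝ) : Polynomial ℝ :=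
  p.sum fun n a => Polynomial.C (a * qInt q n) * Polynomial.X ^ (n - 1)

/-- The q-Appell polynomials attached to the sequence (a_k):
`A_{n,q}(x) = Σ_{k=0}^{n} [n choose k]_q a_k x^(n-k)`. -/
noncomputable def qAppell (q : ℝ) (a : ℕ → ℝ) (n : ℕ) : Polynomial ℝ :=
  ∑ k ∈ Finset.range (n + 1), Polynomial.C (qBinom q n k * a k) * Polynomial.X ^ (n - k)

/-!
Every term of the equation is a polynomial `Σ_{m ≤ n} c_m x^(n-m)`. Since
`D_q A_{n+1,q} = [n+1]_q A_{n,q}`, the first term is `Σ_k [n choose k]_q q^(n-k) α_k A_{n-k,q}`,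
and by the structure relation its coefficient of `x^(n-m)` is `[n choose m]_q q^(n-m) [m]_q a_m`.
The other two terms contribute `[n choose m]_q a_m` times `q^n [n-m]_q` and `-[n]_q q^(n-m)`,
and the three cancel because `[n]_q = [m]_q + q^m [n-m]_q`.
-/

section qCalculus

variable {q : ℝ}

lemma qInt_zero (q : ℝ) : qInt q 0 = 0 := sum_range_zero _

lemma qInt_add (q : ℝ) (m k : ℕ) : qInt q (m + k) = qInt q m + q ^ m * qInt q k := by
  simp only [qInt, sum_range_add, mul_sum, pow_add]

lemma qInt_eq_add_pow_mul_qInt_sub (q : ℝ) {m n : ℕ} (h : m ≤ n) :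
    qInt q n = qInt q m + q ^ m * qInt q (n - m) := by
  rw [← qInt_add, Nat.add_sub_cancel' h]

lemma qInt_succ_pos (hq : 0 ≤ q) (n : ℕ) : 0 < qInt q (n + 1) := by
  rw [qInt, sum_range_succ']
  positivity

lemma qFact_pos (hq : 0 ≤ q) : ∀ n, 0 < qFact q n
  | 0 => one_pos
  | n + 1 => mul_pos (qFact_pos hq n) (qInt_succ_pos hq n)

lemma qBinom_mul_qInt (hq : 0 ≤ q) {n k : ℕ} (hk : k ≤ n) :
    qBinom q (n + 1) k * qInt q (n + 1 - k) = qInt q (n + 1) * qBinom q n k := by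
  have := (qFact_pos hq k).ne'
  have := (qFact_pos hq (n - k)).ne'
  have := (qInt_succ_pos hq (n - k)).ne'
  rw [qBinom, qBinom, Nat.sub_add_comm hk, qFact, qFact]
  field_simp

lemma qBinom_mul_qBinom (hq : 0 ≤ q) {n m k : ℕ} (hkm : k ≤ m) :
    qBinom q n k * qBinom q (n - k) (m - k) = qBinom q n m * qBinom q m k := by
  have := (qFact_pos hq k).ne'
  have := (qFact_pos hq (m - k)).ne'
  have := (qFact_pos hq (n - m)).ne'
  have := (qFact_pos hq (n - k)).ne'
  have := (qFact_pos hq m).ne'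
  rw [qBinom, qBinom, qBinom, qBinom, Nat.sub_sub_sub_cancel_right hkm]
  field_simp

end qCalculus

section qDeriv

variable (q : ℝ)

lemma qDeriv_monomial (n : ℕ) (c : ℝ) :
    qDeriv q (monomial n c) = C (c * qInt q n) * X ^ (n - 1) := by
  rw [qDeriv, sum_monomial_index]
  simp

lemma qDeriv_add (p r : ℝ[X]) : qDeriv q (p + r) = qDeriv q p + qDeriv q r :=
  sum_add_index _ _ _ (fun _ => by simp) (fun _ _ _ => by rw [add_mul, C_add, add_mul])

lemma qDeriv_sum {ι : Type*} (s : Finset ι) (f : ι → ℝ[X]) :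
    qDeriv q (∑ i ∈ s, f i) = ∑ i ∈ s, qDeriv q (f i) :=
  map_sum (AddMonoidHom.mk' (qDeriv q) (qDeriv_add q)) f s

lemma qDeriv_C_mul (c : ℝ) (p : ℝ[X]) : qDeriv q (C c * p) = C c * qDeriv q p := by
  induction p using Polynomial.induction_on' with
  | add p r hp hr => rw [mul_add, qDeriv_add, qDeriv_add, hp, hr, mul_add]
  | monomial n b => rw [C_mul_monomial, qDeriv_monomial, qDeriv_monomial, ← mul_assoc, ← C_mul,
      mul_assoc]

lemma qDeriv_C_mul_X_pow (c : ℝ) (n : ℕ) :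
    qDeriv q (C c * X ^ n) = C (c * qInt q n) * X ^ (n - 1) := by
  rw [C_mul_X_pow_eq_monomial, qDeriv_monomial]

lemma X_mul_qDeriv_C_mul_X_pow (c : ℝ) (n : ℕ) :
    X * qDeriv q (C c * X ^ n) = C (c * qInt q n) * X ^ n := by
  rw [qDeriv_C_mul_X_pow]
  cases n with
  | zero => simp [qInt_zero]
  | succ n => rw [Nat.add_sub_cancel, mul_left_comm, ← pow_succ']

end qDeriv

noncomputable def ofDescCoeffs {R : Type*} [CommSemiring R] (n : ℕ) (c : ℕ → R) : R[X] :=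
  ∑ m ∈ range (n + 1), C (c m) * X ^ (n - m)

section ofDescCoeffs

variable {R : Type*} [CommRing R] (n : ℕ) (c d : ℕ → R)

lemma ofDescCoeffs_add :
    ofDescCoeffs n (fun m => c m + d m) = ofDescCoeffs n c + ofDescCoeffs n d := by
  simp only [ofDescCoeffs, C_add, add_mul, sum_add_distrib]

lemma ofDescCoeffs_sub :
    ofDescCoeffs n (fun m => c m - d m) = ofDescCoeffs n c - ofDescCoeffs n d := by
  simp only [ofDescCoeffs, C_sub, sub_mul, sum_sub_distrib]

lemma C_mul_ofDescCoeffs (r : R) : C r * ofDescCoeffs n c = ofDescCoeffs n (fun m => r * c m) := by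
  simp only [ofDescCoeffs, mul_sum, C_mul, mul_assoc]

lemma ofDescCoeffs_congr {n : ℕ} {c d : ℕ → R} (h : ∀ m ≤ n, c m = d m) :
    ofDescCoeffs n c = ofDescCoeffs n d :=
  sum_congr rfl fun m hm => by rw [h m (Nat.lt_succ_iff.mp (mem_range.mp hm))]

lemma ofDescCoeffs_eq_zero {n : ℕ} {c : ℕ → R} (h : ∀ m ≤ n, c m = 0) :
    ofDescCoeffs n c = 0 :=
  (ofDescCoeffs_congr h).trans (by simp [ofDescCoeffs])

lemma ofDescCoeffs_comp_C_mul_X (r : R) :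
    (ofDescCoeffs n c).comp (C r * X) = ofDescCoeffs n (fun m => c m * r ^ (n - m)) := by
  simp only [ofDescCoeffs, Polynomial.sum_comp, mul_comp, C_comp, X_pow_comp, mul_pow, ← C_pow,
    C_mul, mul_assoc]

end ofDescCoeffs

lemma X_mul_qDeriv_ofDescCoeffs (q : ℝ) (n : ℕ) (c : ℕ → ℝ) :
    X * qDeriv q (ofDescCoeffs n c) = ofDescCoeffs n (fun m => c m * qInt q (n - m)) := by
  simp only [ofDescCoeffs, qDeriv_sum, mul_sum, X_mul_qDeriv_C_mul_X_pow]

lemma qDeriv_ofDescCoeffs_succ (q : ℝ) (n : ℕ) (c : ℕ → ℝ) :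
    qDeriv q (ofDescCoeffs (n + 1) c) = ofDescCoeffs n (fun m => c m * qInt q (n + 1 - m)) := by
  rw [ofDescCoeffs, qDeriv_sum, sum_range_succ, qDeriv_C_mul_X_pow, Nat.sub_self, qInt_zero,
    mul_zero, C_0, zero_mul, add_zero, ofDescCoeffs]
  refine sum_congr rfl fun m hm => ?_
  rw [qDeriv_C_mul_X_pow, Nat.sub_right_comm, Nat.add_sub_cancel]

section qAppell

variable {q : ℝ} (a : ℕ → ℝ)

lemma qAppell_eq_ofDescCoeffs (q : ℝ) (n : ℕ) :
    qAppell q a n = ofDescCoeffs n (fun m => qBinom q n m * a m) := rfl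

lemma qDeriv_qAppell_succ (hq : 0 ≤ q) (n : ℕ) :
    qDeriv q (qAppell q a (n + 1)) = C (qInt q (n + 1)) * qAppell q a n := by
  rw [qAppell_eq_ofDescCoeffs, qDeriv_ofDescCoeffs_succ, qAppell_eq_ofDescCoeffs,
    C_mul_ofDescCoeffs]
  refine ofDescCoeffs_congr fun m hm => ?_
  rw [mul_right_comm, qBinom_mul_qInt hq hm, mul_assoc]

lemma qDeriv_iterate_qAppell (hq : 0 ≤ q) {n k : ℕ} (hk : k ≤ n) :
    (qDeriv q)^[k] (qAppell q a n) = C (qFact q n / qFact q (n - k)) * qAppell q a (n - k) := by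
  induction k with
  | zero => rw [Function.iterate_zero_apply, Nat.sub_zero, div_self (qFact_pos hq n).ne', C_1,
      one_mul]
  | succ k ih =>
    obtain ⟨j, hj⟩ : ∃ j, n - k = j + 1 := ⟨n - (k + 1), by omega⟩
    have hj' : n - (k + 1) = j := by omega
    have := (qInt_succ_pos hq j).ne'
    rw [Function.iterate_succ_apply', ih (by omega), qDeriv_C_mul, hj, qDeriv_qAppell_succ a hq,
      ← mul_assoc, ← C_mul, hj', qFact]
    field_simp

lemma sum_qBinom_mul_qAppell (hq : 0 ≤ q) (β : ℕ → ℝ) (n : ℕ) :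
    ∑ k ∈ range (n + 1), C (qBinom q n k * q ^ (n - k) * β k) * qAppell q a (n - k)
      = ofDescCoeffs n (fun m => qBinom q n m * q ^ (n - m) *
          ∑ k ∈ range (m + 1), qBinom q m k * q ^ (m - k) * β k * a (m - k)) := by
  have expand (k : ℕ) (hk : k ≤ n) :
      C (qBinom q n k * q ^ (n - k) * β k) * qAppell q a (n - k)
        = ∑ j ∈ range (n + 1 - k),
            C (qBinom q n k * q ^ (n - k) * β k * (qBinom q (n - k) j * a j))
              * X ^ (n - k - j) := by
    rw [qAppell_eq_ofDescCoeffs, C_mul_ofDescCoeffs, ofDescCoeffs, Nat.sub_add_comm hk]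
  rw [sum_congr rfl fun k hk => expand k (Nat.lt_succ_iff.mp (mem_range.mp hk)),
    ← sum_range_diag_flip, ofDescCoeffs]
  refine sum_congr rfl fun m hm => ?_
  rw [mul_sum, map_sum, sum_mul]
  refine sum_congr rfl fun k hk => ?_
  have hmn := Nat.lt_succ_iff.mp (mem_range.mp hm)
  have hkm := Nat.lt_succ_iff.mp (mem_range.mp hk)
  have hpow : q ^ (n - k) = q ^ (n - m) * q ^ (m - k) := by rw [← pow_add]; congr 1; omega
  rw [Nat.sub_sub_sub_cancel_right hkm, hpow]
  congr 2
  linear_combination q ^ (n - m) * q ^ (m - k) * β k * a (m - k) * qBinom_mul_qBinom hq hkm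

lemma sum_C_mul_qDeriv_iterate_qAppell (hq : 0 ≤ q) (α : ℕ → ℝ)
    (hα : ∀ n : ℕ, qInt q n * a n
      = ∑ k ∈ range (n + 1), qBinom q n k * q ^ (n - k) * α k * a (n - k)) (n : ℕ) :
    ∑ k ∈ range (n + 1), C (q ^ (n - k) * α k / qFact q k) * (qDeriv q)^[k] (qAppell q a n)
      = ofDescCoeffs n (fun m => qBinom q n m * q ^ (n - m) * (qInt q m * a m)) := by
  simp only [hα, ← sum_qBinom_mul_qAppell a hq]
  refine sum_congr rfl fun k hk => ?_
  have hkn := Nat.lt_succ_iff.mp (mem_range.mp hk)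
  have := (qFact_pos hq k).ne'
  have := (qFact_pos hq (n - k)).ne'
  rw [qDeriv_iterate_qAppell a hq hkn, ← mul_assoc, ← C_mul, qBinom]
  field_simp

end qAppell

theorem qAppell_qDifference_equation_general (q : ℝ) (hq0 : 0 < q)
    (a : ℕ → ℝ) (α : ℕ → ℝ)
    (hα : ∀ n : ℕ, qInt q n * a n
      = ∑ k ∈ Finset.range (n + 1), qBinom q n k * q ^ (n - k) * α k * a (n - k))
    (n : ℕ) :
    (∑ k ∈ Finset.range (n + 1),
        Polynomial.C (q ^ (n - k) * α k / qFact q k) * (qDeriv q)^[k] (qAppell q a n))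
      + Polynomial.C (q ^ n) * Polynomial.X * qDeriv q (qAppell q a n)
      - Polynomial.C (qInt q n) * (qAppell q a n).comp (Polynomial.C q * Polynomial.X) = 0 := by
  rw [sum_C_mul_qDeriv_iterate_qAppell a hq0.le α hα, mul_assoc, qAppell_eq_ofDescCoeffs,
    X_mul_qDeriv_ofDescCoeffs, ofDescCoeffs_comp_C_mul_X, C_mul_ofDescCoeffs, C_mul_ofDescCoeffs,
    ← ofDescCoeffs_add, ← ofDescCoeffs_sub]
  refine ofDescCoeffs_eq_zero fun m hm => ?_
  rw [qInt_eq_add_pow_mul_qInt_sub q hm, ← pow_mul_pow_sub q hm]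
  ring

/-- Under the structure relation for (α_n), the q-Appell polynomial A_{n,q} satisfies the
q-difference equation
`Σ_{k=0}^n (q^(n-k) α_k/[k]_q!) D_q^k A_{n,q}(x) + x q^n D_q A_{n,q}(x) − [n]_q A_{n,q}(qx) = 0`. -/
theorem qAppell_qDifference_equation (q : ℝ) (hq0 : 0 < q) (hq1 : q < 1)
    (a : ℕ → ℝ) (ha : a 0 ≠ 0) (α : ℕ → ℝ)
    (hα : ∀ n : ℕ, qInt q n * a n
      = ∑ k ∈ Finset.range (n + 1), qBinom q n k * q ^ (n - k) * α k * a (n - k))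
    (n : ℕ) (hn : 1 ≤ n) :
    (∑ k ∈ Finset.range (n + 1),
        Polynomial.C (q ^ (n - k) * α k / qFact q k) * (qDeriv q)^[k] (qAppell q a n))
      + Polynomial.C (q ^ n) * Polynomial.X * qDeriv q (qAppell q a n)
      - Polynomial.C (qInt q n) * (qAppell q a n).comp (Polynomial.C q * Polynomial.X) = 0 :=
  qAppell_qDifference_equation_general q hq0 a α hα n
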